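/- Let n ≥ 1 be an integer, δ ∈ (0,1) with ln(1/δ) < n/4, and set ε = √(ln(1/δ)/n). Let σ be uniform on {0,1} and t* uniform on {1,…,N}, independent. Conditionally on (σ, t*), generate N independent datasets Z_1, …, Z_N ∈ {0,1}^n, where the entries of Z_{t*} are i.i.d. Bernoulli with P(label = σ) = 1/2 + ε and the entries of Z_t for t ≠ t* are i.i.d. Bernoulli(1/2). If N ≥ δ^{−8}, then for every function ψ : ({0,1}^n)^N → {0,1}, P(ψ(Z_1,…,Z_N) ≠ σ) ≥ (2 − √2)/4. -/

import Mathlib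

/-- Bernoulli weight: probability of label `b` when the probability of label
`true` is `p`. -/
noncomputable def bern (p : ℝ) (b : Bool) : ℝ := if b then p else 1 - p

/-- Likelihood of a dataset `z` of `n` i.i.d. Bernoulli(`p`) labels. -/
noncomputable def dsLik (n : ℕ) (p : ℝ) (z : Fin n → Bool) : ℝ := ∏ i, bern p (z i)

/-- Probability of label `1` for the biased source with `P(label = σ) = 1/2 + ε`. -/
noncomputable def biasedP (ε : ℝ) (σ : Bool) : ℝ := if σ then 1/2 + ε else 1/2 - ε

/-! Averaging over the unknown position `t*` turns the hypotheses `σ = 1` and `σ = 0` into two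
mixtures `P₁, P₀` of the pooled data, and by Le Cam's two-point argument every estimator errs with
probability at least `1/2 - ‖P₁ - P₀‖₁ / 4`. By Cauchy–Schwarz, `‖P₁ - P₀‖₁²` is at most
`2^{nN} ∑ (P₁ - P₀)²`. The difference `L₊ - L₋` of the likelihoods of a dataset with label bias
`±ε` has mean zero under the uniform distribution, so the cross terms of this second moment vanish
and it equals `(2ⁿ / N) ∑_w (L₊ - L₋)²(w) ≤ 2 e^{4nε²} / N = 2 δ⁻⁴ / N ≤ 2 δ⁴`.
Hence `‖P₁ - P₀‖₁ ≤ √2`. -/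

open Finset

section TwoPoint

variable {α : Type*} [Fintype α]

theorem sum_abs_le_sqrt_card_mul_sum_sq (f : α → ℝ) :
    ∑ x, |f x| ≤ √(Fintype.card α * ∑ x, f x ^ 2) :=
  Real.le_sqrt_of_sq_le <| by
    simpa using sq_sum_le_card_mul_sum_sq (s := univ) (f := fun x => |f x|)

theorem le_cam_two_point (P : Bool → α → ℝ) (hP : ∀ σ, ∑ x, P σ x = 1) (ψ : α → Bool) :
    1 / 2 - (1 / 4) * ∑ x, |P true x - P false x| ≤
      (1 / 2) * ∑ σ, ∑ x, P σ x * (if ψ x = σ then 0 else 1) := by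
  have hmin : ∀ x, (P true x + P false x) / 2 - |P true x - P false x| / 2 ≤
      ∑ σ, P σ x * (if ψ x = σ then 0 else 1) := by
    intro x
    rw [Fintype.sum_bool]
    cases ψ x <;> simp only [Bool.false_eq_true, Bool.true_eq_false, if_true, if_false, mul_zero,
      mul_one, add_zero, zero_add]
    · linarith [neg_abs_le (P true x - P false x)]
    · linarith [le_abs_self (P true x - P false x)]
  calc 1 / 2 - (1 / 4) * ∑ x, |P true x - P false x|
      = (1 / 2) * ∑ x, ((P true x + P false x) / 2 - |P true x - P false x| / 2) := by
        rw [sum_sub_distrib, ← sum_div, ← sum_div, sum_add_distrib, hP, hP]; ring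
    _ ≤ (1 / 2) * ∑ x, ∑ σ, P σ x * (if ψ x = σ then 0 else 1) := by
        gcongr with x; exact hmin x
    _ = _ := by rw [sum_comm]

theorem le_cam_two_point_of_card_mul_sum_sq_le (P : Bool → α → ℝ) (hP : ∀ σ, ∑ x, P σ x = 1)
    (ψ : α → Bool) {B : ℝ} (hB : Fintype.card α * ∑ x, (P true x - P false x) ^ 2 ≤ B) :
    1 / 2 - √B / 4 ≤ (1 / 2) * ∑ σ, ∑ x, P σ x * (if ψ x = σ then 0 else 1) := by
  refine le_trans ?_ (le_cam_two_point P hP ψ)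
  have hL1 := (sum_abs_le_sqrt_card_mul_sum_sq _).trans (Real.sqrt_le_sqrt hB)
  linarith

end TwoPoint

section ProductSpace

variable {ι K : Type*} [Fintype ι] [DecidableEq ι] [Fintype K]

theorem Fintype.sum_fun_apply {M : Type*} [AddCommMonoid M] (f : K → M) (i : ι) :
    ∑ z : ι → K, f (z i) = Fintype.card K ^ (Fintype.card ι - 1) • ∑ w, f w := by
  simpa using Fintype.sum_piFinset_apply f (univ : Finset K) i

theorem sum_fun_apply_mul_apply_of_ne {d : K → ℝ} (hd : ∑ w, d w = 0) (g : K → ℝ)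
    {i j : ι} (hij : i ≠ j) : ∑ z : ι → K, d (z i) * g (z j) = 0 := by
  rw [Fintype.sum_equiv (Equiv.funSplitAt i K) (fun z => d (z i) * g (z j))
    (fun p => d p.1 * g (p.2 ⟨j, hij.symm⟩)) (fun _ => rfl), Fintype.sum_prod_type]
  simp_rw [← mul_sum, ← sum_mul, hd, zero_mul]

theorem sum_sq_sum_fun_apply {d : K → ℝ} (hd : ∑ w, d w = 0) :
    ∑ z : ι → K, (∑ i, d (z i)) ^ 2 =
      Fintype.card ι * Fintype.card K ^ (Fintype.card ι - 1) * ∑ w, d w ^ 2 := by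
  have hdiag : ∀ i : ι, ∑ j, ∑ z : ι → K, d (z i) * d (z j) =
      Fintype.card K ^ (Fintype.card ι - 1) * ∑ w, d w ^ 2 := by
    intro i
    rw [sum_eq_single i (fun j _ hji => sum_fun_apply_mul_apply_of_ne hd d hji.symm)
      (by simp)]
    simpa [sq] using Fintype.sum_fun_apply (fun w => d w * d w) i
  calc ∑ z : ι → K, (∑ i, d (z i)) ^ 2 = ∑ i, ∑ j, ∑ z : ι → K, d (z i) * d (z j) := by
        simp_rw [sq, Fintype.sum_mul_sum]
        rw [sum_comm, sum_congr rfl fun i _ => sum_comm]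
    _ = _ := by
        rw [sum_congr rfl fun i _ => hdiag i, sum_const, card_univ, nsmul_eq_mul, mul_assoc]

end ProductSpace

section Bernoulli

variable (n : ℕ)

theorem sum_dsLik (p : ℝ) : ∑ w, dsLik n p w = 1 := by
  simp only [dsLik]
  rw [← Fintype.sum_pow]
  simp [bern]

theorem sum_dsLik_mul_dsLik (a b : ℝ) :
    ∑ w, dsLik n a w * dsLik n b w = (a * b + (1 - a) * (1 - b)) ^ n := by
  simp_rw [dsLik, ← prod_mul_distrib]
  rw [← Fintype.sum_pow (fun x => bern a x * bern b x)]
  simp [bern]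

theorem dsLik_half (w : Fin n → Bool) : dsLik n (1 / 2) w = ((2 : ℝ) ^ n)⁻¹ := by
  have hbern : ∀ b, bern (1 / 2) b = 2⁻¹ := by intro b; cases b <;> norm_num [bern]
  simp only [dsLik, hbern, prod_const, card_univ, Fintype.card_fin, inv_pow]

theorem two_pow_mul_sum_sq_dsLik_sub (ε : ℝ) :
    2 ^ n * ∑ w, (dsLik n (1 / 2 + ε) w - dsLik n (1 / 2 - ε) w) ^ 2 =
      2 * ((1 + 4 * ε ^ 2) ^ n - (1 - 4 * ε ^ 2) ^ n) := by
  have hoverlap : ∀ a b : ℝ, a * b + (1 - a) * (1 - b) = (1 + (2 * a - 1) * (2 * b - 1)) / 2 := by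
    intro a b; ring
  simp_rw [sub_sq, sum_add_distrib, sum_sub_distrib, mul_assoc, ← mul_sum, sq,
    sum_dsLik_mul_dsLik, hoverlap, div_pow]
  field_simp
  ring

theorem two_pow_mul_sum_sq_dsLik_sub_le {ε : ℝ} (hε : 4 * ε ^ 2 ≤ 1) :
    2 ^ n * ∑ w, (dsLik n (1 / 2 + ε) w - dsLik n (1 / 2 - ε) w) ^ 2 ≤
      2 * Real.exp (4 * n * ε ^ 2) := by
  rw [two_pow_mul_sum_sq_dsLik_sub]
  have hpos : 0 ≤ (1 - 4 * ε ^ 2) ^ n := pow_nonneg (by linarith) n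
  have hexp : (1 + 4 * ε ^ 2) ^ n ≤ Real.exp (4 * n * ε ^ 2) :=
    calc (1 + 4 * ε ^ 2) ^ n ≤ Real.exp (4 * ε ^ 2) ^ n := by
          gcongr; linarith [Real.add_one_le_exp (4 * ε ^ 2)]
      _ = Real.exp (4 * n * ε ^ 2) := by rw [← Real.exp_nat_mul]; ring_nf
  linarith

end Bernoulli

/-- Likelihood of the pooled data `z` when the biased source, with label-`1` probability `p`,
sits at a uniformly random position `t*` and all other sources are fair. -/
noncomputable def pooledLik (n N : ℕ) (p : ℝ) (z : Fin N → Fin n → Bool) : ℝ :=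
  (1 / N) * ∑ t, dsLik n p (z t) * ∏ s ∈ univ.erase t, dsLik n (1 / 2) (z s)

section Pooled

variable {n N : ℕ}

theorem pooledLik_eq (p : ℝ) (z : Fin N → Fin n → Bool) :
    pooledLik n N p z = ((N : ℝ) * (2 ^ n) ^ (N - 1))⁻¹ * ∑ t, dsLik n p (z t) := by
  simp only [pooledLik, dsLik_half, prod_const, card_erase_of_mem (mem_univ _), card_univ,
    Fintype.card_fin, ← sum_mul]
  rw [inv_pow, mul_inv]
  ring

theorem sum_pooledLik_mul (p : ℝ) (g : (Fin N → Fin n → Bool) → ℝ) :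
    ∑ z, pooledLik n N p z * g z =
      1 / N * ∑ t, ∑ z, (dsLik n p (z t) * ∏ s ∈ univ.erase t, dsLik n (1 / 2) (z s)) * g z := by
  simp only [pooledLik, sum_mul, mul_sum, mul_assoc]
  exact sum_comm

theorem sum_pooledLik (hN : 0 < N) (p : ℝ) : ∑ z, pooledLik n N p z = 1 := by
  have hmarg : ∀ t : Fin N, ∑ z : Fin N → Fin n → Bool, dsLik n p (z t) = (2 ^ n) ^ (N - 1) := by
    intro t
    simp [Fintype.sum_fun_apply, sum_dsLik]
  simp_rw [pooledLik_eq, ← mul_sum]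
  rw [sum_comm]
  simp only [hmarg, sum_const, card_univ, Fintype.card_fin, nsmul_eq_mul]
  have : (N : ℝ) ≠ 0 := by positivity
  field_simp

theorem card_mul_sum_sq_pooledLik_sub (hN : 0 < N) (a b : ℝ) :
    Fintype.card (Fin N → Fin n → Bool) * ∑ z, (pooledLik n N a z - pooledLik n N b z) ^ 2 =
      2 ^ n / N * ∑ w, (dsLik n a w - dsLik n b w) ^ 2 := by
  have hd : ∑ w, (dsLik n a w - dsLik n b w) = 0 := by
    rw [sum_sub_distrib, sum_dsLik, sum_dsLik, sub_self]
  simp_rw [pooledLik_eq, ← mul_sub, mul_pow, ← mul_sum, ← sum_sub_distrib]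
  rw [sum_sq_sum_fun_apply hd]
  obtain ⟨M, rfl⟩ := Nat.exists_eq_add_of_lt hN
  simp only [Fintype.card_fun, Fintype.card_fin, Fintype.card_bool]
  push_cast
  field_simp
  ring

theorem card_mul_sum_sq_pooledLik_sub_le (hN : 0 < N) {ε : ℝ} (hε : 4 * ε ^ 2 ≤ 1) :
    Fintype.card (Fin N → Fin n → Bool) *
        ∑ z, (pooledLik n N (1 / 2 + ε) z - pooledLik n N (1 / 2 - ε) z) ^ 2 ≤
      2 * Real.exp (4 * n * ε ^ 2) / N := by
  rw [card_mul_sum_sq_pooledLik_sub hN, div_mul_eq_mul_div]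
  exact div_le_div_of_nonneg_right (two_pow_mul_sum_sq_dsLik_sub_le n hε) (Nat.cast_nonneg _)

end Pooled

theorem stmt6_general (n N : ℕ) (δ : ℝ) (hδ0 : 0 < δ) (hδ1 : δ < 1)
    (hlog : Real.log (1/δ) < (n : ℝ)/4)
    (ε : ℝ) (hε : ε = Real.sqrt (Real.log (1/δ) / n))
    (hN : δ ^ (-(8:ℝ)) ≤ (N:ℝ))
    (ψ : (Fin N → Fin n → Bool) → Bool) :
    (2 - Real.sqrt 2) / 4 ≤
      (1/2) * ∑ σ : Bool, (1/(N:ℝ)) * ∑ tstar : Fin N,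
        ∑ z : Fin N → Fin n → Bool,
          (dsLik n (biasedP ε σ) (z tstar) *
              ∏ t ∈ Finset.univ.erase tstar, dsLik n (1/2) (z t)) *
            (if ψ z = σ then 0 else 1) := by
  have hL : 0 < Real.log (1 / δ) := Real.log_pos (by rw [one_div, one_lt_inv₀ hδ0]; exact hδ1)
  have hn : (0 : ℝ) < n := by linarith
  have hnε : n * ε ^ 2 = Real.log (1 / δ) := by
    rw [hε, Real.sq_sqrt (by positivity)]; field_simp
  have hε4 : 4 * ε ^ 2 ≤ 1 := by nlinarith
  have hN' : (δ ^ 8)⁻¹ ≤ (N : ℝ) := by rwa [Real.rpow_neg hδ0.le, Real.rpow_ofNat] at hN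
  have hN0 : 0 < N := Nat.cast_pos.mp ((by positivity : (0 : ℝ) < (δ ^ 8)⁻¹).trans_le hN')
  have hchi : Fintype.card (Fin N → Fin n → Bool) *
      ∑ z, (pooledLik n N (biasedP ε true) z - pooledLik n N (biasedP ε false) z) ^ 2 ≤ 2 :=
    calc _ ≤ 2 * Real.exp (4 * n * ε ^ 2) / N := card_mul_sum_sq_pooledLik_sub_le hN0 hε4
      _ = 2 * δ ^ 4 * ((δ ^ 8)⁻¹ / N) := by
          rw [mul_assoc 4, hnε, mul_comm 4, Real.exp_mul, Real.exp_log (by positivity),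
            Real.rpow_ofNat]
          field_simp
      _ ≤ 2 * δ ^ 4 :=
          mul_le_of_le_one_right (by positivity) (div_le_one_of_le₀ hN' (by positivity))
      _ ≤ 2 := by nlinarith [pow_le_one₀ hδ0.le hδ1.le (n := 4)]
  calc (2 - √2) / 4 = 1 / 2 - √2 / 4 := by ring
    _ ≤ (1 / 2) * ∑ σ, ∑ z, pooledLik n N (biasedP ε σ) z * (if ψ z = σ then 0 else 1) :=
        le_cam_two_point_of_card_mul_sum_sq_le _ (fun σ => sum_pooledLik hN0 _) ψ hchi
    _ = _ := by simp only [sum_pooledLik_mul]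

/-- Theorem 4.2 of the paper: adaptivity is impossible in the
agnostic case.  With `σ` uniform on `{0,1}`, `t*` uniform on `{1,…,N}`, dataset
`Z_{t*}` of `n` i.i.d. labels with `P(label = σ) = 1/2 + ε` and the other `N−1`
datasets i.i.d. Bernoulli(1/2), if `N ≥ δ^{−8}` then every estimator `ψ` of `σ`
from the pooled data errs with probability at least `(2−√2)/4`. -/
theorem stmt6 (n N : ℕ) (hn : 1 ≤ n) (δ : ℝ) (hδ0 : 0 < δ) (hδ1 : δ < 1)
    (hlog : Real.log (1/δ) < (n : ℝ)/4)
    (ε : ℝ) (hε : ε = Real.sqrt (Real.log (1/δ) / n))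
    (hN : δ ^ (-(8:ℝ)) ≤ (N:ℝ))
    (ψ : (Fin N → Fin n → Bool) → Bool) :
    (2 - Real.sqrt 2) / 4 ≤
      (1/2) * ∑ σ : Bool, (1/(N:ℝ)) * ∑ tstar : Fin N,
        ∑ z : Fin N → Fin n → Bool,
          (dsLik n (biasedP ε σ) (z tstar) *
              ∏ t ∈ Finset.univ.erase tstar, dsLik n (1/2) (z t)) *
            (if ψ z = σ then 0 else 1) :=
  stmt6_general n N δ hδ0 hδ1 hlog ε hε hN ψ
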